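/- Let s be a configuration of system (Π, C) and add a new miner p_new with m_{p_new} ≤ min of all existing miners' powers. Let c = argmax over coins c' of F(c')·m_{p_new}/(M_{c'}(s) + m_{p_new}), and let s' extend s by placing p_new on c. Then p_new is stable in s', and every miner p ∈ Π that was stable in s is stable in s'. -/

import Mathlib

open Finset Function

/-- Total mining power invested in coin `c` in configuration `s`. -/
noncomputable def totalPower {ι C : Type*} [Fintype ι] [DecidableEq C]
    (m : ι → ℝ) (s : ι → C) (c : C) : ℝ :=
  ∑ p, if s p = c then m p else 0

/-- Revenue per unit of coin `c` in configuration `s`. -/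
noncomputable def RPU {ι C : Type*} [Fintype ι] [DecidableEq C]
    (m : ι → ℝ) (F : C → ℝ) (s : ι → C) (c : C) : ℝ :=
  F c / totalPower m s c

/-- Payoff of miner `p` in configuration `s`. -/
noncomputable def payoff {ι C : Type*} [Fintype ι] [DecidableEq C]
    (m : ι → ℝ) (F : C → ℝ) (s : ι → C) (p : ι) : ℝ :=
  m p * F (s p) / totalPower m s (s p)

/-- A better response step of miner `p` moving to coin `c`. -/
def betterStep {ι C : Type*} [Fintype ι] [DecidableEq ι] [DecidableEq C]
    (m : ι → ℝ) (F : C → ℝ) (s : ι → C) (p : ι) (c : C) : Prop :=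
  payoff m F s p < payoff m F (Function.update s p c) p

/-- Miner `p` is stable in `s`: it has no better response step. -/
def minerStable {ι C : Type*} [Fintype ι] [DecidableEq ι] [DecidableEq C]
    (m : ι → ℝ) (F : C → ℝ) (s : ι → C) (p : ι) : Prop :=
  ∀ c, ¬ betterStep m F s p c

/-- A configuration is stable (a pure equilibrium) if no miner has a better response step. -/
def stableConfig {ι C : Type*} [Fintype ι] [DecidableEq ι] [DecidableEq C]
    (m : ι → ℝ) (F : C → ℝ) (s : ι → C) : Prop :=
  ∀ p c, ¬ betterStep m F s p c

/-!
Stability of miner `p` only compares its current revenue per unit `F (s p) / M (s p)` with what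
it would get per unit after joining another coin `d`, namely `F d / (M d + m p)`. Placing the new
miner on `c` raises only the total power of `c`. The new miner is stable by the choice of `c`. An
old miner away from `c` keeps its revenue per unit, and its alternatives can only get worse. An
old miner on `c` is compared with `F d / (M d + m p) ≤ F d / (M d + mnew) ≤ F c / (M c + mnew)`,
using `mnew ≤ m p` and the choice of `c`.
-/

section Game

variable {ι C : Type*} [Fintype ι] [DecidableEq C]

lemma totalPower_nonneg {m : ι → ℝ} (hm : ∀ q, 0 ≤ m q) (s : ι → C) (d : C) :
    0 ≤ totalPower m s d :=
  Finset.sum_nonneg fun q _ => by split_ifs <;> simp [hm q]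

lemma totalPower_option (m : Option ι → ℝ) (s : Option ι → C) (d : C) :
    totalPower m s d =
      (if s none = d then m none else 0) + totalPower (m ∘ some) (s ∘ some) d :=
  Fintype.sum_option _

variable [DecidableEq ι]

lemma totalPower_update_self_of_ne (m : ι → ℝ) {s : ι → C} {p : ι} {d : C} (hd : d ≠ s p) :
    totalPower m (update s p d) d = totalPower m s d + m p := by
  unfold totalPower
  rw [← Finset.add_sum_erase _ _ (mem_univ p), ← Finset.add_sum_erase _ _ (mem_univ p),
    update_self, if_pos rfl, if_neg hd.symm, zero_add, add_comm]
  congr 1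
  refine Finset.sum_congr rfl fun q hq => ?_
  rw [update_of_ne (ne_of_mem_erase hq)]

lemma not_betterStep_self (m : ι → ℝ) (F : C → ℝ) (s : ι → C) (p : ι) :
    ¬ betterStep m F s p (s p) := by
  simp [betterStep]

lemma betterStep_iff {m : ι → ℝ} (F : C → ℝ) {s : ι → C} {p : ι} (hp : 0 < m p) {d : C}
    (hd : d ≠ s p) :
    betterStep m F s p d ↔ RPU m F s (s p) < F d / (totalPower m s d + m p) := by
  rw [betterStep, payoff, payoff, update_self, totalPower_update_self_of_ne m hd, RPU,
    mul_div_assoc, mul_div_assoc, mul_lt_mul_iff_right₀ hp]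

lemma minerStable_iff {m : ι → ℝ} (F : C → ℝ) {s : ι → C} {p : ι} (hp : 0 < m p) :
    minerStable m F s p ↔
      ∀ d, d ≠ s p → F d / (totalPower m s d + m p) ≤ RPU m F s (s p) := by
  refine forall_congr' fun d => ?_
  by_cases hd : d = s p
  · simp [hd, not_betterStep_self]
  · simp [hd, betterStep_iff F hp hd]

end Game

theorem add_smallest_miner_general {ι C : Type*} [Fintype ι] [DecidableEq ι]
    [DecidableEq C]
    (m : ι → ℝ) (F : C → ℝ) (hm : ∀ q, 0 < m q) (hF : ∀ d, 0 < F d)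
    (s : ι → C) (mnew : ℝ) (hmnew : 0 < mnew) (hmin : ∀ p, mnew ≤ m p)
    (c : C)
    (hc : ∀ c' : C, F c' * mnew / (totalPower m s c' + mnew) ≤
      F c * mnew / (totalPower m s c + mnew))
    (m' : Option ι → ℝ) (s' : Option ι → C)
    (hm' : ∀ p, m' (some p) = m p) (hm'new : m' none = mnew)
    (hs' : ∀ p, s' (some p) = s p) (hs'new : s' none = c) :
    minerStable m' F s' none ∧
      ∀ p : ι, minerStable m F s p → minerStable m' F s' (some p) := by
  have hM : ∀ d, 0 ≤ totalPower m s d := totalPower_nonneg (fun q => (hm q).le) s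
  have hM' : ∀ d, totalPower m' s' d = totalPower m s d + if c = d then mnew else 0 := by
    have hm'some : m' ∘ some = m := funext hm'
    have hs'some : s' ∘ some = s := funext hs'
    intro d
    rw [totalPower_option, hm'some, hs'some, hs'new, hm'new, add_comm]
  have hargmax : ∀ d, F d / (totalPower m s d + mnew) ≤ F c / (totalPower m s c + mnew) :=
    fun d => le_of_mul_le_mul_right (by simpa only [div_mul_eq_mul_div] using hc d) hmnew
  refine ⟨?_, fun p hp => ?_⟩
  · rw [minerStable_iff F (hm'new ▸ hmnew)]
    intro d hd
    rw [hs'new] at hd ⊢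
    simpa [RPU, hM', hm'new, Ne.symm hd] using hargmax d
  · rw [minerStable_iff F (hm p)] at hp
    rw [minerStable_iff F ((hm' p).symm ▸ hm p)]
    intro d hd
    simp only [hs', hm', RPU, hM'] at hd hp ⊢
    rcases eq_or_ne c (s p) with rfl | hcp
    · rw [if_pos rfl, if_neg (Ne.symm hd), add_zero]
      calc F d / (totalPower m s d + m p)
          ≤ F d / (totalPower m s d + mnew) :=
            div_le_div_of_nonneg_left (hF d).le (by linarith [hM d]) (by linarith [hmin p])
        _ ≤ F (s p) / (totalPower m s (s p) + mnew) := hargmax d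
    · rw [if_neg hcp, add_zero]
      refine le_trans (div_le_div_of_nonneg_left (hF d).le (by linarith [hM d, hm p]) ?_) (hp d hd)
      split_ifs <;> linarith

/-- adding a new miner, of power at most that of every existing miner, on a
coin maximizing its marginal payoff keeps the new miner and all previously stable miners
stable. The extended set of miners is modeled as `Option ι`, with `none` the new miner. -/
theorem add_smallest_miner {ι C : Type*} [Fintype ι] [DecidableEq ι]
    [Fintype C] [DecidableEq C]
    (m : ι → ℝ) (F : C → ℝ) (hm : ∀ q, 0 < m q) (hF : ∀ d, 0 < F d)
    (s : ι → C) (mnew : ℝ) (hmnew : 0 < mnew) (hmin : ∀ p, mnew ≤ m p)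
    (c : C)
    (hc : ∀ c' : C, F c' * mnew / (totalPower m s c' + mnew) ≤
      F c * mnew / (totalPower m s c + mnew))
    (m' : Option ι → ℝ) (s' : Option ι → C)
    (hm' : ∀ p, m' (some p) = m p) (hm'new : m' none = mnew)
    (hs' : ∀ p, s' (some p) = s p) (hs'new : s' none = c) :
    minerStable m' F s' none ∧
      ∀ p : ι, minerStable m F s p → minerStable m' F s' (some p) :=
  add_smallest_miner_general m F hm hF s mnew hmnew hmin c hc m' s' hm' hm'new hs' hs'new
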